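/- Let (W,S) be a Coxeter system, v, w, x ∈ W with v ≤ w in Bruhat order. Then there exists x' ≤ x such that xv ≤ x'·w with ℓ(x' w) = ℓ(x') + ℓ(w). -/

import Mathlib

/-!
Induction on `ℓ x`: write `x = s y` with `y < s y`, and lift `y` to some `y' ≤ y` first. If `s` is
a left descent of `y' w`, then `y'` also serves for `x`; otherwise `s y'` does, and `s y' w` is
still reduced. Both cases are Deodhar's Property Z: for `a ≤ b`, `s a ≤ s b` if `b < s b`, and
`s a ≤ b` if `s b < b`.

Along a chain of reflection steps, Property Z comes down to one exchange situation, settled by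
the strong exchange condition: every right inversion `t` of `π ω` occurs in the right inversion
sequence of `ω`. That is proved with the sign representation of `W` on `W × ℤˣ`
(Björner–Brenti, Thm. 1.4.3), in which `s` acts by `(x, ε) ↦ (s x s, ±ε)`, flipping the sign
exactly at `x = s`: the sign that `π ω` attaches to `t` is `-1` raised to the number of
occurrences of `t` in the right inversion sequence of `ω`.
-/

namespace CoxeterPaper

open CoxeterSystem

variable {B : Type*} {W : Type*} [Group W] {M : CoxeterMatrix B}

/-- The Bruhat order on a Coxeter group: the reflexive-transitive closure of the
relation `a < a * t` for `t` a reflection with length increasing. -/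
def BruhatLE (cs : CoxeterSystem M W) (x y : W) : Prop :=
  Relation.ReflTransGen
    (fun a b => (∃ t, cs.IsReflection t ∧ b = a * t) ∧ cs.length a < cs.length b) x y

/-- One step of the Demazure product with a simple reflection. -/
noncomputable def demStep (cs : CoxeterSystem M W) (x : W) (i : B) : W :=
  if cs.length x < cs.length (x * cs.simple i) then x * cs.simple i else x

/-- The Demazure product of `x` with the word `l`. -/
noncomputable def demWord (cs : CoxeterSystem M W) (x : W) (l : List B) : W :=
  l.foldl (demStep cs) x

/-- The Demazure product (Coxeter monoid product) of two elements: fold the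
Demazure action of a reduced word of `y` onto `x`. -/
noncomputable def dem (cs : CoxeterSystem M W) (x y : W) : W :=
  demWord cs x (Classical.choose (cs.exists_reduced_word y))

/-- The standard parabolic subgroup attached to a set of simple indices. -/
def parabolic (cs : CoxeterSystem M W) (I : Set B) : Subgroup W :=
  Subgroup.closure (cs.simple '' I)

/-- `I` is finitary if the parabolic subgroup `W_I` is finite. -/
def Finitary (cs : CoxeterSystem M W) (I : Set B) : Prop :=
  (parabolic cs I : Set W).Finite

/-- The double coset `W_I w W_J` as a subset of `W`. -/
def doset (cs : CoxeterSystem M W) (I J : Set B) (w : W) : Set W :=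
  {x | ∃ a ∈ parabolic cs I, ∃ b ∈ parabolic cs J, x = a * w * b}

/-- `p` is an `(I,J)`-double coset. -/
def IsDCoset (cs : CoxeterSystem M W) (I J : Set B) (p : Set W) : Prop :=
  ∃ w, p = doset cs I J w

/-- `m` is the Bruhat-minimal element of `p`. -/
def IsMinOf (cs : CoxeterSystem M W) (p : Set W) (m : W) : Prop :=
  m ∈ p ∧ ∀ x ∈ p, BruhatLE cs m x

/-- `m` is the Bruhat-maximal element of `p`. -/
def IsMaxOf (cs : CoxeterSystem M W) (p : Set W) (m : W) : Prop :=
  m ∈ p ∧ ∀ x ∈ p, BruhatLE cs x m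

/-- `[I 0, …, I d]` is a singlestep expression. -/
def IsSinglestep (I : ℕ → Set B) (d : ℕ) : Prop :=
  ∀ k < d, (∃ s, s ∉ I k ∧ I (k + 1) = insert s (I k)) ∨
    (∃ s, s ∈ I k ∧ I (k + 1) = I k \ {s})

/-- `p` is a path subordinate to the singlestep expression `[I 0, …, I d]`. -/
def IsSubPath (cs : CoxeterSystem M W) (I : ℕ → Set B) (d : ℕ) (p : ℕ → Set W) : Prop :=
  p 0 = doset cs (I 0) (I 0) 1 ∧
  (∀ i ≤ d, IsDCoset cs (I 0) (I i) (p i)) ∧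
  ∀ k < d, (I k ⊆ I (k + 1) → p k ⊆ p (k + 1)) ∧ (I (k + 1) ⊆ I k → p (k + 1) ⊆ p k)

/-- The Demazure product `w_{I_0} * w_{I_1} * ⋯ * w_{I_d}` of the longest elements
`wI 0, …, wI d`. -/
noncomputable def exprMax (cs : CoxeterSystem M W) (wI : ℕ → W) (d : ℕ) : W :=
  ((List.range d).map fun k => wI (k + 1)).foldl (dem cs) (wI 0)

section SignRepresentation

open scoped Classical

variable (cs : CoxeterSystem M W)

local prefix:100 "s" => cs.simple
local prefix:100 "π" => cs.wordProd
local prefix:100 "ℓ" => cs.length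
local prefix:100 "ris" => cs.rightInvSeq

noncomputable def signFlip (i : B) : Equiv.Perm (W × ℤˣ) :=
  Function.Involutive.toPerm
    (fun p => (s i * p.1 * s i, (if p.1 = s i then -1 else 1) * p.2))
    (by
      rintro ⟨x, ε⟩
      have hx : s i * x * s i = s i ↔ x = s i := by
        rw [← mul_left_inj (s i), ← mul_right_inj (s i)]
        simp only [mul_assoc, cs.simple_mul_simple_self, cs.simple_mul_simple_cancel_left, mul_one]
      ext
      · simp [mul_assoc, cs.simple_mul_simple_cancel_left]
      · by_cases h : x = s i <;> simp [hx, h])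

lemma signFlip_apply (i : B) (x : W) (ε : ℤˣ) :
    signFlip cs i (x, ε) = (s i * x * s i, (if x = s i then -1 else 1) * ε) := rfl

lemma simple_mul_pow_eq_inv_mul (i j : B) (k : ℕ) :
    s j * (s i * s j) ^ k = ((s i * s j) ^ k)⁻¹ * s j := by
  induction k with
  | zero => simp
  | succ k ih =>
    rw [pow_succ, ← mul_assoc, ih, ← pow_succ, pow_succ', mul_inv_rev, mul_assoc, mul_assoc]
    simp [mul_assoc]

lemma signFlip_mul_pow_apply (i j : B) (k : ℕ) (x : W) (ε : ℤˣ) :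
    ((signFlip cs i * signFlip cs j) ^ k) (x, ε) =
      ((s i * s j) ^ k * x * ((s i * s j) ^ k)⁻¹,
        (∏ n ∈ Finset.range (2 * k), if (s i * s j) ^ n * x = s j then -1 else 1) * ε) := by
  induction k with
  | zero => simp
  | succ k ih =>
    rw [pow_succ', Equiv.Perm.mul_apply, ih, Equiv.Perm.mul_apply, signFlip_apply, signFlip_apply]
    set c := s i * s j with hc
    set y := c ^ k * x * (c ^ k)⁻¹
    have hsj : c ^ k * s j * c ^ k = s j := by
      rw [mul_assoc, simple_mul_pow_eq_inv_mul, mul_inv_cancel_left]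
    have h₁ : y = s j ↔ c ^ (2 * k) * x = s j := by
      calc y = s j ↔ c ^ k * y * c ^ k = c ^ k * s j * c ^ k := by
            simp only [mul_left_inj, mul_right_inj]
        _ ↔ _ := by rw [hsj, show c ^ (2 * k) * x = c ^ k * y * c ^ k by simp only [y]; group]
    have h₂ : s j * y * s j = s i ↔ c ^ (2 * k + 1) * x = s j := by
      have e : c ^ k * s i * (s j * y * s j) * (s j * c ^ k) = c ^ (2 * k + 1) * x := by
        simp only [y, mul_assoc, cs.simple_mul_simple_cancel_left]
        rw [← mul_assoc (s i), ← hc]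
        group
      have hsj' : c ^ k * s i * s i * (s j * c ^ k) = s j := by
        rw [cs.simple_mul_simple_cancel_right, ← mul_assoc, hsj]
      calc s j * y * s j = s i ↔ c ^ k * s i * (s j * y * s j) * (s j * c ^ k) =
            c ^ k * s i * s i * (s j * c ^ k) := by
            simp only [mul_left_inj, mul_right_inj]
        _ ↔ _ := by rw [e, hsj']
    refine Prod.ext ?_ ?_
    · simp [y, hc, pow_succ', mul_assoc]
    · simp only [if_congr h₁ rfl rfl, if_congr h₂ rfl rfl, Nat.mul_succ, Finset.prod_range_succ]
      ac_rfl

lemma isLiftable_signFlip : M.IsLiftable (signFlip cs) := by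
  intro i j
  ext ⟨x, ε⟩ : 1
  -- the `2 * M i j` sign factors are `M i j`-periodic, so their product is a square
  rw [signFlip_mul_pow_apply, cs.simple_mul_simple_pow, two_mul, Finset.prod_range_add]
  simp only [pow_add, cs.simple_mul_simple_pow, one_mul, Int.units_mul_self, inv_one, mul_one,
    Equiv.Perm.one_apply]

noncomputable def signRep : W →* Equiv.Perm (W × ℤˣ) :=
  cs.lift ⟨signFlip cs, isLiftable_signFlip cs⟩

lemma signRep_wordProd_apply (ω : List B) (x : W) (ε : ℤˣ) :
    signRep cs (π ω) (x, ε) = (π ω * x * (π ω)⁻¹, (-1) ^ (ris ω).count x * ε) := by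
  induction ω with
  | nil => simp
  | cons i ω ih =>
    rw [cs.wordProd_cons, map_mul, Equiv.Perm.mul_apply, ih, signRep, cs.lift_apply_simple,
      signFlip_apply, rightInvSeq, List.count_cons]
    have h : π ω * x * (π ω)⁻¹ = s i ↔ (π ω)⁻¹ * s i * π ω = x := by
      constructor <;> intro h <;> rw [← h] <;> group
    refine Prod.ext (by simp [mul_assoc]) ?_
    simp only [if_congr h rfl rfl, beq_iff_eq, pow_add]
    split_ifs <;> simp [mul_comm]

lemma signRep_apply (g x : W) (ε : ℤˣ) :
    signRep cs g (x, ε) = (g * x * g⁻¹, (signRep cs g (x, 1)).2 * ε) := by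
  obtain ⟨ω, rfl⟩ := cs.wordProd_surjective g
  simp [signRep_wordProd_apply]

lemma signRep_reflection_apply_self {t : W} (ht : cs.IsReflection t) (ε : ℤˣ) :
    signRep cs t (t, ε) = (t, -ε) := by
  obtain ⟨u, i, rfl⟩ := ht
  obtain ⟨δ, hδ⟩ : ∃ δ, signRep cs u⁻¹ (u * s i * u⁻¹, ε) = (s i, δ) :=
    ⟨_, by rw [signRep_apply]; exact Prod.ext (by group) rfl⟩
  have hu : signRep cs u (s i, δ) = (u * s i * u⁻¹, ε) := by
    rw [← hδ, ← Equiv.Perm.mul_apply, ← map_mul, mul_inv_cancel, map_one, Equiv.Perm.one_apply]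
  have hflip : signRep cs (s i) (s i, δ) = (s i, -δ) := by
    simp [signRep, signFlip_apply]
  calc signRep cs (u * s i * u⁻¹) (u * s i * u⁻¹, ε)
      = signRep cs u (signRep cs (s i) (signRep cs u⁻¹ (u * s i * u⁻¹, ε))) := by
        simp only [map_mul, Equiv.Perm.mul_apply]
    _ = signRep cs u (s i, -δ) := by rw [hδ, hflip]
    _ = (u * s i * u⁻¹, -ε) := by
        rw [signRep_apply, Prod.mk.injEq] at hu
        rw [signRep_apply, hu.1, mul_neg, hu.2]

theorem mem_rightInvSeq_of_isRightInversion {ω : List B} {t : W}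
    (ht : cs.IsRightInversion (π ω) t) : t ∈ ris ω := by
  by_contra hmem
  obtain ⟨α, hα, hαt⟩ := cs.exists_isReduced (π ω * t)
  have htα : t ∉ ris α := fun h => by
    have := (cs.isRightInversion_of_mem_rightInvSeq hα h).2
    rw [← hαt, mul_assoc, ht.1.mul_self, mul_one] at this
    exact absurd ht.2 (by omega)
  -- read along `ω` the sign of `t` is `1`, read along `α` and then `t` it is `-1`
  have hsign : (signRep cs (π ω) (t, 1)).2 = 1 := by
    rw [signRep_wordProd_apply, List.count_eq_zero.2 hmem, pow_zero, mul_one]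
  rw [show π ω = π α * t by rw [← hαt, mul_assoc, ht.1.mul_self, mul_one], map_mul,
    Equiv.Perm.mul_apply, signRep_reflection_apply_self cs ht.1, signRep_wordProd_apply,
    List.count_eq_zero.2 htα] at hsign
  simp at hsign

end SignRepresentation

section Bruhat

variable {cs : CoxeterSystem M W}

local prefix:100 "s" => cs.simple
local prefix:100 "π" => cs.wordProd
local prefix:100 "ℓ" => cs.length

theorem BruhatLE.refl (x : W) : BruhatLE cs x x := Relation.ReflTransGen.refl

theorem BruhatLE.trans {x y z : W} (hxy : BruhatLE cs x y) (hyz : BruhatLE cs y z) :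
    BruhatLE cs x z :=
  Relation.ReflTransGen.trans hxy hyz

theorem bruhatLE_mul_of_isReflection {u t : W} (ht : cs.IsReflection t)
    (h : ℓ u < ℓ (u * t)) : BruhatLE cs u (u * t) :=
  Relation.ReflTransGen.single ⟨⟨t, ht, rfl⟩, h⟩

theorem bruhatLE_of_isRightInversion {u t : W} (h : cs.IsRightInversion u t) :
    BruhatLE cs (u * t) u :=
  Relation.ReflTransGen.single ⟨⟨t, h.1, by rw [mul_assoc, h.1.mul_self, mul_one]⟩, h.2⟩

theorem bruhatLE_simple_mul {u : W} {i : B} (h : ¬cs.IsLeftDescent u i) :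
    BruhatLE cs u (s i * u) := by
  have ht : cs.IsReflection (u⁻¹ * s i * u) := by
    simpa using (cs.isReflection_simple i).conj u⁻¹
  have hlt : ℓ u < ℓ (s i * u) := by
    rw [cs.not_isLeftDescent_iff.mp h]
    omega
  have e : u * (u⁻¹ * s i * u) = s i * u := by group
  rw [← e]
  exact bruhatLE_mul_of_isReflection ht (by rwa [e])

theorem bruhatLE_of_isLeftDescent {u : W} {i : B} (h : cs.IsLeftDescent u i) :
    BruhatLE cs (s i * u) u := by
  have := bruhatLE_simple_mul (cs.isLeftDescent_iff_not_isLeftDescent_mul.mp h)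
  rwa [cs.simple_mul_simple_cancel_left] at this

theorem simple_mul_bruhatLE_of_isLeftDescent_mul {b t : W} {i : B} (ht : cs.IsReflection t)
    (hlt : ℓ b < ℓ (b * t)) (hi : cs.IsLeftDescent (b * t) i) :
    BruhatLE cs (s i * b) (b * t) := by
  have htt : b * t * t = b := by rw [mul_assoc, ht.mul_self, mul_one]
  obtain ⟨α, hα, hαc⟩ := cs.exists_isReduced (s i * (b * t))
  have hinv : cs.IsRightInversion (π (i :: α)) t := by
    rw [cs.wordProd_cons, ← hαc, cs.simple_mul_simple_cancel_left]
    exact ⟨ht, by rwa [htt]⟩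
  -- either `t` heads the right inversion sequence of `i :: α`, whence `s i * b = b * t`,
  -- or `t` is a right inversion of `π α = s i * b * t`
  rcases List.mem_cons.mp (mem_rightInvSeq_of_isRightInversion cs hinv) with h | h
  · have hsb : π α * t = s i * π α := by rw [h]; group
    rw [← hαc, mul_assoc, htt, cs.simple_mul_simple_cancel_left] at hsb
    rw [hsb]
    exact .refl _
  · have hsc := bruhatLE_of_isRightInversion (cs.isRightInversion_of_mem_rightInvSeq hα h)
    rw [← hαc, mul_assoc, htt] at hsc
    exact hsc.trans (bruhatLE_of_isLeftDescent hi)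

theorem BruhatLE.simple_mul {a b : W} (h : BruhatLE cs a b) (i : B) :
    (¬cs.IsLeftDescent b i → BruhatLE cs (s i * a) (s i * b)) ∧
      (cs.IsLeftDescent b i → BruhatLE cs (s i * a) b) := by
  induction h with
  | refl => exact ⟨fun _ => .refl _, bruhatLE_of_isLeftDescent⟩
  | @tail b _ _ hbc ih =>
    obtain ⟨⟨t, ht, rfl⟩, hlt⟩ := hbc
    have hbt : BruhatLE cs b (b * t) := bruhatLE_mul_of_isReflection ht hlt
    by_cases hb : cs.IsLeftDescent b i
    · have hab := (ih.2 hb).trans hbt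
      exact ⟨fun hc => hab.trans (bruhatLE_simple_mul hc), fun _ => hab⟩
    · refine ⟨fun hc => (ih.1 hb).trans ?_, fun hc => (ih.1 hb).trans ?_⟩
      · rw [← mul_assoc]
        refine bruhatLE_mul_of_isReflection ht ?_
        rw [mul_assoc, cs.not_isLeftDescent_iff.mp hb, cs.not_isLeftDescent_iff.mp hc]
        omega
      · exact simple_mul_bruhatLE_of_isLeftDescent_mul ht hlt hc

theorem exists_lift_simple_mul {v w y y' : W} {i : B} (hy : ¬cs.IsLeftDescent y i)
    (hy' : BruhatLE cs y' y) (hv : BruhatLE cs (y * v) (y' * w))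
    (hlen : ℓ (y' * w) = ℓ y' + ℓ w) :
    ∃ x', BruhatLE cs x' (s i * y) ∧ BruhatLE cs (s i * y * v) (x' * w) ∧
      ℓ (x' * w) = ℓ x' + ℓ w := by
  rw [mul_assoc]
  by_cases hd : cs.IsLeftDescent (y' * w) i
  · exact ⟨y', hy'.trans (bruhatLE_simple_mul hy), (hv.simple_mul i).2 hd, hlen⟩
  · have hsy'w : ℓ (s i * (y' * w)) = ℓ (y' * w) + 1 := cs.not_isLeftDescent_iff.mp hd
    have hsy' : ℓ (s i * y') = ℓ y' + 1 := by
      have := cs.length_mul_le (s i * y') w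
      rw [mul_assoc] at this
      rcases cs.length_simple_mul y' i with h | h <;> omega
    refine ⟨s i * y', (hy'.simple_mul i).1 hy, ?_, ?_⟩
    · rw [mul_assoc]
      exact (hv.simple_mul i).1 hd
    · rw [mul_assoc, hsy'w, hlen, hsy']
      omega

end Bruhat

/-- Lifting: if `v ≤ w` then there is `x' ≤ x` with `x * v ≤ x' * w` and the
product `x' * w` reduced. -/
theorem lifting_left (cs : CoxeterSystem M W) (v w x : W) (h : BruhatLE cs v w) :
    ∃ x', BruhatLE cs x' x ∧ BruhatLE cs (x * v) (x' * w) ∧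
      cs.length (x' * w) = cs.length x' + cs.length w := by
  obtain ⟨n, hn⟩ : ∃ n, cs.length x = n := ⟨_, rfl⟩
  induction n generalizing x with
  | zero =>
    obtain rfl := cs.length_eq_zero_iff.mp hn
    exact ⟨1, .refl 1, by simpa using h, by simp⟩
  | succ n ih =>
    obtain ⟨i, hi⟩ := cs.exists_leftDescent_of_ne_one (w := x) (by rintro rfl; simp at hn)
    obtain ⟨y', hy', hv, hlen⟩ :=
      ih (cs.simple i * x) (by have := cs.isLeftDescent_iff.mp hi; omega)
    have hy := cs.isLeftDescent_iff_not_isLeftDescent_mul.mp hi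
    simpa only [cs.simple_mul_simple_cancel_left] using exists_lift_simple_mul hy hy' hv hlen

end CoxeterPaper
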